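/- arXiv:1310.6021 — 2 statements merged into one kernel-verified Lean document; each statement's English description precedes it below -/
import Mathlib

section
/- If Θ is a congruence relation on the semilattice (P^{<ω}_{>0}(A), ∪) of finite nonempty subsets of a set A, then the operator C_Θ defined by C_Θ(T) = {a ∈ A | there exists a finite nonempty subset U of T with U ∪ {a} Θ U} is an algebraic closure operator on P(A) with C_Θ(∅) = ∅. -/
/-- `T` is a finite nonempty subset. -/
def finNE {A : Type*} (T : Set A) : Prop := T.Finite ∧ T.Nonempty

/-- The closure operator induced by an equivalence `Θ` on finite nonempty subsets:
`C_Θ(T) = {a | ∃ finite nonempty U ⊆ T, (U ∪ {a}) Θ U}`. -/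
def CTheta {A : Type*} (Θ : Set A → Set A → Prop) (T : Set A) : Set A :=
  {a | ∃ U : Set A, U.Finite ∧ U.Nonempty ∧ U ⊆ T ∧ Θ (U ∪ {a}) U}

lemma key {A : Type*} (Θ : Set A → Set A → Prop)
    (hrefl : ∀ X : Set A, finNE X → Θ X X)
    (hsymm : ∀ X Y : Set A, Θ X Y → Θ Y X)
    (htrans : ∀ X Y Z : Set A, Θ X Y → Θ Y Z → Θ X Z)
    (hunion : ∀ X Y X' Y' : Set A, finNE X → finNE Y → finNE X' → finNE Y' →
      Θ X X' → Θ Y Y' → Θ (X ∪ Y) (X' ∪ Y'))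
    (T : Set A) (U : Set A) (hU : U.Finite) :
    U.Nonempty → (∀ u ∈ U, u ∈ CTheta Θ T) →
    ∃ W : Set A, W.Finite ∧ W.Nonempty ∧ W ⊆ T ∧ Θ (W ∪ U) W := by
  induction U, hU using Set.Finite.induction_on with
  | empty => intro h; exact absurd rfl h.ne_empty
  | @insert u S huS hS ih =>
    intro _ hall
    obtain ⟨V, hVf, hVne, hVT, hVθ⟩ := hall u (Set.mem_insert _ _)
    rcases S.eq_empty_or_nonempty with rfl | hSne
    · exact ⟨V, hVf, hVne, hVT, by simpa using hVθ⟩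
    · obtain ⟨W, hWf, hWne, hWT, hWθ⟩ := ih hSne (fun x hx => hall x (Set.mem_insert_of_mem _ hx))
      refine ⟨W ∪ V, hWf.union hVf, hWne.mono Set.subset_union_left, Set.union_subset hWT hVT, ?_⟩
      have h1 : Θ ((W ∪ S) ∪ (V ∪ {u})) (W ∪ V) :=
        hunion _ _ _ _ ⟨hWf.union hS, hWne.mono Set.subset_union_left⟩
          ⟨hVf.union (Set.finite_singleton u), hVne.mono Set.subset_union_left⟩
          ⟨hWf, hWne⟩ ⟨hVf, hVne⟩ hWθ hVθ
      have he : (W ∪ S) ∪ (V ∪ {u}) = (W ∪ V) ∪ insert u S := by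
        ext x; simp [Set.mem_insert_iff]; tauto
      rwa [he] at h1

/-- Lemma 3.2: if `Θ` is a congruence on the semilattice of finite nonempty subsets of `A`
(with union), then `C_Θ` is an algebraic `∅`-preserving closure operator on `P(A)`. -/
theorem stmt0 {A : Type*} (Θ : Set A → Set A → Prop)
    (hrefl : ∀ X : Set A, finNE X → Θ X X)
    (hsymm : ∀ X Y : Set A, Θ X Y → Θ Y X)
    (htrans : ∀ X Y Z : Set A, Θ X Y → Θ Y Z → Θ X Z)
    (hunion : ∀ X Y X' Y' : Set A, finNE X → finNE Y → finNE X' → finNE Y' →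
      Θ X X' → Θ Y Y' → Θ (X ∪ Y) (X' ∪ Y')) :
    CTheta Θ (∅ : Set A) = ∅ ∧
    (∀ T : Set A, T ⊆ CTheta Θ T) ∧
    (∀ T W : Set A, T ⊆ W → CTheta Θ T ⊆ CTheta Θ W) ∧
    (∀ T : Set A, CTheta Θ (CTheta Θ T) = CTheta Θ T) ∧
    (∀ B : Set A, CTheta Θ B = ⋃ F ∈ {F : Set A | F.Finite ∧ F ⊆ B}, CTheta Θ F) := by
  have hext : ∀ T : Set A, T ⊆ CTheta Θ T := by
    intro T a ha
    exact ⟨{a}, Set.finite_singleton a, Set.singleton_nonempty a,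
      Set.singleton_subset_iff.mpr ha, by
        simpa using hrefl {a} ⟨Set.finite_singleton a, Set.singleton_nonempty a⟩⟩
  have hmono : ∀ T W : Set A, T ⊆ W → CTheta Θ T ⊆ CTheta Θ W := by
    rintro T W hTW a ⟨U, h1, h2, h3, h4⟩
    exact ⟨U, h1, h2, h3.trans hTW, h4⟩
  refine ⟨?_, hext, hmono, ?_, ?_⟩
  · ext a
    simp only [CTheta, Set.mem_setOf_eq, Set.mem_empty_iff_false, iff_false]
    rintro ⟨U, _, hne, hsub, _⟩
    exact hne.ne_empty (Set.subset_empty_iff.mp hsub)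
  · intro T
    apply Set.Subset.antisymm _ (hext _)
    rintro a ⟨U, hUf, hUne, hUC, hUθ⟩
    obtain ⟨W, hWf, hWne, hWT, hWθ⟩ := key Θ hrefl hsymm htrans hunion T U hUf hUne
      (fun u hu => hUC hu)
    have hWU : finNE (W ∪ U) := ⟨hWf.union hUf, hWne.mono Set.subset_union_left⟩
    have haNE : finNE ({a} : Set A) := ⟨Set.finite_singleton a, Set.singleton_nonempty a⟩
    -- Θ ((W ∪ U) ∪ {a}) (W ∪ {a})
    have h1 : Θ ((W ∪ U) ∪ {a}) (W ∪ {a}) :=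
      hunion _ _ _ _ hWU haNE ⟨hWf, hWne⟩ haNE hWθ (hrefl _ haNE)
    -- Θ (W ∪ (U ∪ {a})) (W ∪ U)
    have h2 : Θ (W ∪ (U ∪ {a})) (W ∪ U) :=
      hunion _ _ _ _ ⟨hWf, hWne⟩ ⟨hUf.union haNE.1, hUne.mono Set.subset_union_left⟩
        ⟨hWf, hWne⟩ ⟨hUf, hUne⟩ (hrefl _ ⟨hWf, hWne⟩) hUθ
    have he : W ∪ (U ∪ {a}) = (W ∪ U) ∪ {a} := (Set.union_assoc _ _ _).symm
    rw [he] at h2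
    have h3 : Θ (W ∪ {a}) W :=
      htrans _ _ _ (hsymm _ _ h1) (htrans _ _ _ h2 hWθ)
    exact ⟨W, hWf, hWne, hWT, h3⟩
  · intro B
    ext a
    simp only [Set.mem_iUnion, Set.mem_setOf_eq]
    constructor
    · rintro ⟨U, hUf, hUne, hUB, hUθ⟩
      exact ⟨U, ⟨hUf, hUB⟩, U, hUf, hUne, le_refl U, hUθ⟩
    · rintro ⟨F, ⟨hFf, hFB⟩, ha⟩
      exact hmono F B hFB ha
end

section
/- Let (A, Ω) be an algebra without constant operations and C a closure operator on P(A) satisfying ω(C(A₁), …, C(Aₙ)) ⊆ C(ω(A₁, …, Aₙ)) for all ω ∈ Ω. On the set P_C(A) of nonempty C-closed subsets, define ω_C(X₁, …, Xₙ) := C(ω(X₁, …, Xₙ)) and X + Y := C(X ∪ Y). Then each operation ω_C distributes over +, i.e., ω_C(X₁, …, Xᵢ + Yᵢ, …, Xₙ) = ω_C(X₁, …, Xᵢ, …, Xₙ) + ω_C(X₁, …, Yᵢ, …, Xₙ) for each argument position i. -/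
/-- The complex (power) operation on subsets induced by an `n`-ary operation `f`. -/
def setOp {A : Type*} {n : ℕ} (f : (Fin n → A) → A) (X : Fin n → Set A) : Set A :=
  {b : A | ∃ x : Fin n → A, (∀ k, x k ∈ X k) ∧ f x = b}

/-- `C` is a closure operator on `P(A)`. -/
def IsClosure {A : Type*} (C : Set A → Set A) : Prop :=
  (∀ T : Set A, T ⊆ C T) ∧ (∀ T W : Set A, T ⊆ W → C T ⊆ C W) ∧
  (∀ T : Set A, C (C T) = C T)

lemma setOp_mono {A : Type*} {n : ℕ} (f : (Fin n → A) → A) {X Y : Fin n → Set A}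
    (h : ∀ k, X k ⊆ Y k) : setOp f X ⊆ setOp f Y := by
  rintro b ⟨x, hx, rfl⟩
  exact ⟨x, fun k => h k (hx k), rfl⟩

lemma cUnionClosed {A : Type*} {C : Set A → Set A} (hC : IsClosure C) (S T : Set A) :
    C (C S ∪ C T) = C (S ∪ T) := by
  obtain ⟨h1, h2, h3⟩ := hC
  apply Set.Subset.antisymm
  · have : C S ∪ C T ⊆ C (S ∪ T) := by
      apply Set.union_subset
      · exact h2 _ _ Set.subset_union_left
      · exact h2 _ _ Set.subset_union_right
    calc C (C S ∪ C T) ⊆ C (C (S ∪ T)) := h2 _ _ this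
      _ = C (S ∪ T) := h3 _
  · exact h2 _ _ (Set.union_subset_union (h1 S) (h1 T))

lemma setOp_update_union {A : Type*} {n : ℕ} (f : (Fin n → A) → A) (X : Fin n → Set A)
    (j : Fin n) (S T : Set A) :
    setOp f (Function.update X j (S ∪ T)) =
      setOp f (Function.update X j S) ∪ setOp f (Function.update X j T) := by
  ext b
  constructor
  · rintro ⟨x, hx, rfl⟩
    have hj := hx j
    rw [Function.update_self] at hj
    rcases hj with hj | hj
    · left; refine ⟨x, fun k => ?_, rfl⟩
      by_cases hk : k = j
      · subst hk; simpa using hj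
      · simpa [Function.update_of_ne hk] using hx k
    · right; refine ⟨x, fun k => ?_, rfl⟩
      by_cases hk : k = j
      · subst hk; simpa using hj
      · simpa [Function.update_of_ne hk] using hx k
  · rintro (⟨x, hx, rfl⟩ | ⟨x, hx, rfl⟩)
    · refine ⟨x, fun k => ?_, rfl⟩
      by_cases hk : k = j
      · subst hk; rw [Function.update_self]; exact Or.inl (by simpa using hx k)
      · simpa [Function.update_of_ne hk] using hx k
    · refine ⟨x, fun k => ?_, rfl⟩
      by_cases hk : k = j
      · subst hk; rw [Function.update_self]; exact Or.inr (by simpa using hx k)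
      · simpa [Function.update_of_ne hk] using hx k

/-- Example 2.4: on the set of nonempty `C`-closed subsets, with
`ω_C(X₁,…,Xₙ) := C(ω(X₁,…,Xₙ))` and `X + Y := C(X ∪ Y)`, every operation `ω_C`
distributes over `+` in each argument position. -/
theorem stmt8 {A : Type*} {ι : Type*} (ar : ι → ℕ) (hnc : ∀ i, 0 < ar i)
    (op : ∀ i, (Fin (ar i) → A) → A)
    (C : Set A → Set A) (hC : IsClosure C)
    (h241 : ∀ i, ∀ X : Fin (ar i) → Set A,
      setOp (op i) (fun k => C (X k)) ⊆ C (setOp (op i) X))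
    (i : ι) (X : Fin (ar i) → Set A)
    (hX : ∀ k, C (X k) = X k ∧ (X k).Nonempty)
    (j : Fin (ar i)) (Y : Set A) (hY : C Y = Y) (hYne : Y.Nonempty) :
    C (setOp (op i) (Function.update X j (C (X j ∪ Y)))) =
      C (C (setOp (op i) X) ∪ C (setOp (op i) (Function.update X j Y))) := by
  obtain ⟨h1, h2, h3⟩ := hC
  set V : Fin (ar i) → Set A := Function.update X j (X j ∪ Y) with hV
  have hVC : Function.update X j (C (X j ∪ Y)) = fun k => C (V k) := by
    funext k
    by_cases hk : k = j
    · subst hk; simp [hV]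
    · simp [hV, Function.update_of_ne hk, (hX k).1]
  have key : C (setOp (op i) (Function.update X j (C (X j ∪ Y)))) = C (setOp (op i) V) := by
    apply Set.Subset.antisymm
    · rw [hVC]
      calc C (setOp (op i) fun k => C (V k)) ⊆ C (C (setOp (op i) V)) := h2 _ _ (h241 i V)
        _ = C (setOp (op i) V) := h3 _
    · apply h2
      apply setOp_mono
      intro k
      by_cases hk : k = j
      · subst hk; simpa [hV] using h1 (X k ∪ Y)
      · simp [hV, Function.update_of_ne hk]
  have hsplit : setOp (op i) V = setOp (op i) X ∪ setOp (op i) (Function.update X j Y) := by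
    rw [hV, setOp_update_union, Function.update_eq_self]
  rw [key, hsplit, cUnionClosed ⟨h1, h2, h3⟩]
end
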